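/- Let $n \ge 2$, let $x \in \mathbb{R}^n$, and let $w \in \mathbb{R}^n$ with $\|w\| = 1$. Then the characteristic polynomial of the real symmetric matrix $M = (x^T w) I_n + x w^T + w x^T$ satisfies $\det(\lambda I_n - M) = (\lambda - x^T w)^{n-2}\big((\lambda - 2 x^T w)^2 - \|x\|^2\big)$ for all $\lambda$; in particular the eigenvalues of $M$ are $x^T w$ (with multiplicity $n-2$) and $2 x^T w \pm \|x\|$, and consequently $M + 3\|x\| I_n$ is positive semidefinite. -/

import Mathlib

/-!
Write `c = xᵀw` and `M = c I + A B`, where `A` has columns `x, w` and `B` has rows `wᵀ, xᵀ`.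
Sylvester's identity `det(λ I - A B) = λ^(n-2) det(λ I - B A)` reduces the determinant to that of
`B A = !![c, 1; ‖x‖², c]`, whose characteristic polynomial is `(λ - c)² - ‖x‖²`; shifting `λ` by `c`
gives the formula. Positive semidefiniteness comes from the quadratic form
`vᵀ M v = c ‖v‖² + 2 (xᵀv)(wᵀv) ≥ -3 ‖x‖ ‖v‖²`, by Cauchy–Schwarz twice.
-/

open Matrix Polynomial

theorem neg_three_mul_le_inner_mul_sq_add_two_mul_inner_mul_inner {E : Type*}
    [NormedAddCommGroup E] [InnerProductSpace ℝ E] (x w v : E) :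
    -(3 * (‖x‖ * ‖w‖) * ‖v‖ ^ 2) ≤
      inner ℝ x w * ‖v‖ ^ 2 + 2 * (inner ℝ x v * inner ℝ w v) := by
  have hxw : -(‖x‖ * ‖w‖) ≤ inner ℝ x w := neg_le_of_abs_le (abs_real_inner_le_norm x w)
  have hxv_wv : -(‖x‖ * ‖w‖ * ‖v‖ ^ 2) ≤ inner ℝ x v * inner ℝ w v := by
    refine neg_le_of_abs_le ?_
    calc |inner ℝ x v * inner ℝ w v| = |inner ℝ x v| * |inner ℝ w v| := abs_mul _ _
      _ ≤ (‖x‖ * ‖v‖) * (‖w‖ * ‖v‖) :=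
        mul_le_mul (abs_real_inner_le_norm x v) (abs_real_inner_le_norm w v)
          (abs_nonneg _) (by positivity)
      _ = ‖x‖ * ‖w‖ * ‖v‖ ^ 2 := by ring
  nlinarith [sq_nonneg ‖v‖]

namespace Matrix

section CommRing

variable {R n : Type*} [CommRing R] [Fintype n] [DecidableEq n]

theorem det_smul_one_sub_eq_eval_charpoly (M : Matrix n n R) (t : R) :
    (t • (1 : Matrix n n R) - M).det = M.charpoly.eval t := by
  rw [eval_charpoly, smul_one_eq_diagonal, scalar_apply]

theorem charpoly_vecMulVec_add_vecMulVec [Nontrivial R] (u v : n → R)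
    (hn : 2 ≤ Fintype.card n) :
    (vecMulVec u v + vecMulVec v u).charpoly =
      X ^ (Fintype.card n - 2) * ((X - C (u ⬝ᵥ v)) ^ 2 - C ((u ⬝ᵥ u) * (v ⬝ᵥ v))) := by
  have hfactor : vecMulVec u v + vecMulVec v u = (of ![u, v])ᵀ * of ![v, u] := by
    ext i j
    simp [mul_apply, Fin.sum_univ_two, vecMulVec_apply]
  have hswap : of ![v, u] * (of ![u, v])ᵀ = !![v ⬝ᵥ u, v ⬝ᵥ v; u ⬝ᵥ u, u ⬝ᵥ v] := by
    ext i j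
    fin_cases i <;> fin_cases j <;> rfl
  rw [hfactor, charpoly_mul_comm_of_le _ _ (by simpa using hn), hswap, charpoly_fin_two,
    Fintype.card_fin, trace_fin_two_of, det_fin_two_of, dotProduct_comm v u]
  congr 1
  simp only [map_sub, map_mul, map_add]
  ring

theorem dotProduct_smul_one_add_vecMulVec_add_vecMulVec_mulVec (x w v : n → R) (c : R) :
    v ⬝ᵥ ((c • (1 : Matrix n n R) + vecMulVec x w + vecMulVec w x) *ᵥ v) =
      c * (v ⬝ᵥ v) + 2 * ((x ⬝ᵥ v) * (w ⬝ᵥ v)) := by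
  rw [dotProduct_comm]
  simp only [add_mulVec, smul_mulVec, one_mulVec, vecMulVec_mulVec, op_smul_eq_smul,
    add_dotProduct, smul_dotProduct, smul_eq_mul]
  ring

omit [Fintype n] in
theorem isHermitian_smul_one_add_vecMulVec_add_vecMulVec [StarRing R] [TrivialStar R]
    (x w : n → R) (c : R) :
    (c • (1 : Matrix n n R) + vecMulVec x w + vecMulVec w x).IsHermitian := by
  simp only [IsHermitian, conjTranspose_add, conjTranspose_smul, conjTranspose_one,
    conjTranspose_vecMulVec, star_trivial]
  abel

end CommRing

variable {n : Type*} [Fintype n] [DecidableEq n]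

theorem posSemidef_inner_smul_one_add_vecMulVec_add_vecMulVec_add_smul_one
    (x w : EuclideanSpace ℝ n) :
    (inner ℝ x w • (1 : Matrix n n ℝ) + vecMulVec x.ofLp w.ofLp + vecMulVec w.ofLp x.ofLp
      + (3 * (‖x‖ * ‖w‖)) • 1).PosSemidef := by
  set k := 3 * (‖x‖ * ‖w‖)
  have hshift : inner ℝ x w • (1 : Matrix n n ℝ) + vecMulVec x.ofLp w.ofLp
      + vecMulVec w.ofLp x.ofLp + k • 1
      = (inner ℝ x w + k) • 1 + vecMulVec x.ofLp w.ofLp + vecMulVec w.ofLp x.ofLp := by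
    rw [add_smul]; abel
  rw [hshift, posSemidef_iff_dotProduct_mulVec]
  refine ⟨isHermitian_smul_one_add_vecMulVec_add_vecMulVec _ _ _, fun v => ?_⟩
  have hv : v ⬝ᵥ v = ‖WithLp.toLp 2 v‖ ^ 2 := by
    rw [← real_inner_self_eq_norm_sq, EuclideanSpace.inner_eq_star_dotProduct]; rfl
  have hinner (y : EuclideanSpace ℝ n) : y.ofLp ⬝ᵥ v = inner ℝ y (WithLp.toLp 2 v) := by
    rw [EuclideanSpace.inner_eq_star_dotProduct, dotProduct_comm]; rfl
  rw [star_trivial, dotProduct_smul_one_add_vecMulVec_add_vecMulVec_mulVec, hv, hinner, hinner]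
  linarith [neg_three_mul_le_inner_mul_sq_add_two_mul_inner_mul_inner x w (WithLp.toLp 2 v)]

end Matrix

/-- For `n ≥ 2`, `x ∈ ℝ^n` and a unit vector `w ∈ ℝ^n`, the
characteristic polynomial of `M = (xᵀw) I + x wᵀ + w xᵀ` is
`(λ - xᵀw)^(n-2) ((λ - 2 xᵀw)² - ‖x‖²)`; consequently `M + 3‖x‖ I` is positive
semidefinite. -/
theorem charpoly_rank_two_perturbation
    (n : ℕ) (hn : 2 ≤ n) (x w : EuclideanSpace ℝ (Fin n)) (hw : ‖w‖ = 1)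
    (M : Matrix (Fin n) (Fin n) ℝ)
    (hM : M = (inner ℝ x w : ℝ) • (1 : Matrix (Fin n) (Fin n) ℝ)
        + Matrix.vecMulVec (fun i => x i) (fun j => w j)
        + Matrix.vecMulVec (fun i => w i) (fun j => x j)) :
    (∀ lam : ℝ,
      Matrix.det (lam • (1 : Matrix (Fin n) (Fin n) ℝ) - M) =
        (lam - (inner ℝ x w : ℝ)) ^ (n - 2) *
          ((lam - 2 * (inner ℝ x w : ℝ)) ^ 2 - ‖x‖ ^ 2)) ∧
      (M + (3 * ‖x‖) • (1 : Matrix (Fin n) (Fin n) ℝ)).PosSemidef := by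
  subst hM
  set c := inner ℝ x w
  have hdot (y z : EuclideanSpace ℝ (Fin n)) : y.ofLp ⬝ᵥ z.ofLp = inner ℝ z y := rfl
  refine ⟨fun lam => ?_, ?_⟩
  · calc (lam • (1 : Matrix (Fin n) (Fin n) ℝ) - (c • 1 + vecMulVec x.ofLp w.ofLp
          + vecMulVec w.ofLp x.ofLp)).det
        = ((lam - c) • 1 - (vecMulVec x.ofLp w.ofLp + vecMulVec w.ofLp x.ofLp)).det := by
          rw [sub_smul]; congr 1; abel
      _ = (vecMulVec x.ofLp w.ofLp + vecMulVec w.ofLp x.ofLp).charpoly.eval (lam - c) :=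
          det_smul_one_sub_eq_eval_charpoly _ _
      _ = (lam - c) ^ (n - 2) * ((lam - 2 * c) ^ 2 - ‖x‖ ^ 2) := by
          rw [charpoly_vecMulVec_add_vecMulVec _ _ (by simpa using hn), hdot, hdot, hdot,
            real_inner_self_eq_norm_sq, real_inner_self_eq_norm_sq, hw, real_inner_comm]
          simp only [Fintype.card_fin, eval_mul, eval_pow, eval_sub, eval_X, eval_C]
          ring
  · simpa only [hw, mul_one] using
      posSemidef_inner_smul_one_add_vecMulVec_add_vecMulVec_add_smul_one x w
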